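/- arXiv:math/0702324 — 4 statements merged into one kernel-verified Lean document; each statement's English description precedes it below -/
import Mathlib

section
/- For every natural number ℓ ≥ 0 there exist real polynomials φ and λ in one variable such that (t-1)·φ(t)² + 1 = t^(ℓ+1)·λ(t) for all t, the degree of λ equals ℓ, and φ(t) > 0 for all t ≥ 0. -/
/-!
Take for `φ` the truncation below degree `ℓ + 1` of the binomial series
`f = ∑ (2n choose n) / 4ⁿ Xⁿ` of `(1 - X)^(-1/2)`. The recurrence
`2 (n + 1) c_{n+1} = (2n + 1) c_n` of its coefficients says `2 (1 - X) f' = f`, so `(1 - X) f²`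
has derivative zero and equals `1`. Hence `X^(ℓ+1)` divides `(X - 1) φ² + 1`, a polynomial of
degree `2ℓ + 1`, and `φ > 0` on `[0, ∞)` because its coefficients are positive.
-/

open Polynomial

theorem Polynomial.natDegree_X_sub_one_mul_sq_add_one {R : Type*} [CommRing R] [IsDomain R]
    {φ : R[X]} (hφ : φ ≠ 0) : ((X - 1) * φ ^ 2 + 1).natDegree = 2 * φ.natDegree + 1 := by
  rw [← C_1, natDegree_add_C, natDegree_mul (X_sub_C_ne_zero 1) (pow_ne_zero 2 hφ),
    natDegree_X_sub_C, natDegree_pow]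
  ring

namespace PowerSeries

section Trunc

variable {R : Type*}

theorem X_pow_dvd_of_X_pow_dvd_coe [CommSemiring R] {p : R[X]} {n : ℕ}
    (h : (X : R⟦X⟧) ^ n ∣ p) : Polynomial.X ^ n ∣ p :=
  Polynomial.X_pow_dvd_iff.mpr fun d hd => by simpa using X_pow_dvd_iff.mp h d hd

theorem X_pow_dvd_sub_trunc [CommRing R] (f : R⟦X⟧) (n : ℕ) :
    (X : R⟦X⟧) ^ n ∣ f - (trunc n f : R⟦X⟧) :=
  ⟨_, sub_eq_of_eq_add (eq_X_pow_mul_shift_add_trunc n f)⟩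

theorem X_pow_dvd_one_sub_mul_trunc_pow [CommRing R] {p : R[X]} {f : R⟦X⟧} {k : ℕ}
    (hf : (p : R⟦X⟧) * f ^ k = 1) (n : ℕ) : Polynomial.X ^ n ∣ 1 - p * trunc n f ^ k := by
  apply X_pow_dvd_of_X_pow_dvd_coe
  rw [Polynomial.coe_sub, Polynomial.coe_one, Polynomial.coe_mul, Polynomial.coe_pow, ← hf,
    ← mul_sub]
  exact ((X_pow_dvd_sub_trunc f n).trans (sub_dvd_pow_sub_pow _ _ k)).mul_left _

theorem eval_trunc_succ_pos [CommSemiring R] [PartialOrder R] [IsStrictOrderedRing R]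
    {f : R⟦X⟧} (hf : ∀ n, 0 ≤ coeff n f) (h0 : 0 < constantCoeff f) (n : ℕ) {t : R}
    (ht : 0 ≤ t) : 0 < (trunc (n + 1) f).eval t := by
  rw [← eval₂_id, eval₂_trunc_eq_sum_range]
  refine Finset.sum_pos' (fun i _ => mul_nonneg (hf i) (pow_nonneg ht i)) ⟨0, by simp, ?_⟩
  simpa using h0

theorem natDegree_trunc_succ [CommSemiring R] {f : R⟦X⟧} {n : ℕ}
    (h : coeff n f ≠ 0) : (trunc (n + 1) f).natDegree = n :=
  le_antisymm (Nat.lt_succ_iff.mp (natDegree_trunc_lt f n))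
    (le_natDegree_of_ne_zero (by rwa [coeff_trunc, if_pos n.lt_succ_self]))

end Trunc

section InvSqrtOneSub

variable (K : Type*) [Field K]

noncomputable def invSqrtOneSub : K⟦X⟧ :=
  mk fun n => (n.centralBinom : K) / 4 ^ n

variable {K}

theorem coeff_invSqrtOneSub (n : ℕ) :
    coeff n (invSqrtOneSub K) = (n.centralBinom : K) / 4 ^ n :=
  coeff_mk _ _

@[simp]
theorem constantCoeff_invSqrtOneSub : constantCoeff (invSqrtOneSub K) = 1 := by
  simp [← coeff_zero_eq_constantCoeff_apply, coeff_invSqrtOneSub]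

variable [CharZero K]

theorem two_mul_succ_mul_coeff_invSqrtOneSub_succ (n : ℕ) :
    2 * (n + 1) * coeff (n + 1) (invSqrtOneSub K) = (2 * n + 1) * coeff n (invSqrtOneSub K) := by
  have h : ((n : K) + 1) * (n + 1).centralBinom = 2 * (2 * n + 1) * n.centralBinom := by
    exact_mod_cast Nat.succ_mul_centralBinom_succ n
  simp only [coeff_invSqrtOneSub, pow_succ]
  field_simp
  linear_combination 2 * h

theorem one_sub_X_mul_two_mul_derivative_invSqrtOneSub :
    (1 - X) * (2 * d⁄dX K (invSqrtOneSub K)) = invSqrtOneSub K := by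
  rw [← map_ofNat C 2]
  ext n
  rcases n with _ | n
  · rw [sub_mul, one_mul, map_sub, coeff_zero_X_mul, sub_zero, coeff_C_mul, coeff_derivative]
    linear_combination (norm := (push_cast; ring))
      two_mul_succ_mul_coeff_invSqrtOneSub_succ (K := K) 0
  · rw [sub_mul, one_mul, map_sub, coeff_succ_X_mul, coeff_C_mul, coeff_C_mul,
      coeff_derivative, coeff_derivative]
    linear_combination (norm := (push_cast; ring))
      two_mul_succ_mul_coeff_invSqrtOneSub_succ (K := K) (n + 1)

theorem one_sub_X_mul_invSqrtOneSub_sq : (1 - X) * invSqrtOneSub K ^ 2 = 1 := by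
  refine derivative.ext ?_ (by simp)
  rw [derivative_one, Derivation.leibniz, derivative_pow, map_sub, derivative_one, derivative_X,
    smul_eq_mul, smul_eq_mul]
  linear_combination (norm := (norm_num; ring))
    invSqrtOneSub K * one_sub_X_mul_two_mul_derivative_invSqrtOneSub (K := K)

end InvSqrtOneSub

theorem coeff_invSqrtOneSub_pos {K : Type*} [Field K] [LinearOrder K] [IsStrictOrderedRing K]
    (n : ℕ) : 0 < coeff n (invSqrtOneSub K) := by
  rw [coeff_invSqrtOneSub]
  exact div_pos (by exact_mod_cast n.centralBinom_pos) (by positivity)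

end PowerSeries

theorem stmt_0 (ℓ : ℕ) :
    ∃ φ lam : Polynomial ℝ,
      (∀ t : ℝ, (t - 1) * (φ.eval t) ^ 2 + 1 = t ^ (ℓ + 1) * lam.eval t) ∧
      lam.natDegree = ℓ ∧
      (∀ t : ℝ, 0 ≤ t → 0 < φ.eval t) := by
  set φ := PowerSeries.trunc (ℓ + 1) (PowerSeries.invSqrtOneSub ℝ)
  have hpos : ∀ t : ℝ, 0 ≤ t → 0 < φ.eval t := fun t ht =>
    PowerSeries.eval_trunc_succ_pos (fun n => (PowerSeries.coeff_invSqrtOneSub_pos n).le)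
      (by simp) ℓ ht
  have hdeg : ((X - 1) * φ ^ 2 + 1).natDegree = 2 * ℓ + 1 := by
    rw [natDegree_X_sub_one_mul_sq_add_one fun h => (hpos 0 le_rfl).ne' (by simp [h]),
      PowerSeries.natDegree_trunc_succ (PowerSeries.coeff_invSqrtOneSub_pos ℓ).ne']
  obtain ⟨lam, hlam⟩ : X ^ (ℓ + 1) ∣ (X - 1) * φ ^ 2 + 1 := by
    convert PowerSeries.X_pow_dvd_one_sub_mul_trunc_pow (p := 1 - X)
      (f := PowerSeries.invSqrtOneSub ℝ) (k := 2)
      (by simpa using PowerSeries.one_sub_X_mul_invSqrtOneSub_sq) (ℓ + 1) using 1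
    ring
  have hlam0 : lam ≠ 0 := by
    rintro rfl
    simp [hlam] at hdeg
  refine ⟨φ, lam, fun t => by simpa using congrArg (eval t) hlam, ?_, hpos⟩
  rw [hlam, natDegree_X_pow_mul _ hlam0] at hdeg
  omega
end

section
/- For every natural number k ≥ 1 there exist polynomials ρ, β₁, β₂ in two variables s, t — with ρ and β₁ having real coefficients and β₂ having purely imaginary coefficients — such that (t - s)·ρ(s,t)² + s^(2k-1) = t^k·(β₁(s,t)² + β₂(s,t)²) for all (s,t) ∈ ℂ², and ρ(1,t) > 0 for all real t ≥ 0. -/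
/-!
With `c n = (2n choose n) / 4 ^ n`, the series `f = ∑ c n X ^ n` is `(1 - X) ^ (-1/2)`: the
recursion `(n + 1) c (n + 1) = (n + 1/2) c n` says `2 (1 - X) f' = f`, so `(1 - X) f²` has zero
derivative and equals `1`. Hence the truncation `p` of `f` in degree `< k` has positive
coefficients and satisfies `(X - 1) p² + 1 = X ^ k a` with `deg a < k`. Homogenizing in degree
`k - 1`, with `t` as the variable and `s` as the homogenizing one, turns this into
`(t - s) ρ² + s ^ (2k - 1) = t ^ k A`, and `A = β₁² + β₂²` for `β₁ = (A + 1)/2`,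
`β₂ = i (A - 1)/2`.
-/

namespace Polynomial

lemma X_pow_dvd_iff_coe {R : Type*} [CommSemiring R] {n : ℕ} {q : R[X]} :
    X ^ n ∣ q ↔ PowerSeries.X ^ n ∣ (q : PowerSeries R) := by
  simp only [X_pow_dvd_iff, PowerSeries.X_pow_dvd_iff, coeff_coe]

lemma natDegree_le_of_X_pow_mul_eq {R : Type*} [Semiring R] [Nontrivial R] {a q : R[X]}
    {m d : ℕ} (h : X ^ m * a = q) (hq : q.natDegree ≤ m + d) : a.natDegree ≤ d := by
  rcases eq_or_ne a 0 with rfl | ha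
  · simp
  · rw [← h, natDegree_X_pow_mul (n := m) ha] at hq
    omega

lemma natDegree_X_sub_one_mul_sq_add_one_le {R : Type*} [CommRing R] {p : R[X]} {n : ℕ}
    (hp : p.natDegree ≤ n) : ((X - 1) * p ^ 2 + 1).natDegree ≤ (n + 1) + n := by
  have h1 : (X - 1 : R[X]).natDegree ≤ 1 := by simpa using natDegree_X_sub_C_le (1 : R)
  have h2 : (p ^ 2).natDegree ≤ 2 * n := natDegree_pow_le.trans (by omega)
  exact (natDegree_add_le _ _).trans (max_le (natDegree_mul_le.trans (by omega)) (by simp))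

lemma homogenize_X_sub_one_mul_sq_add_one {R : Type*} [CommRing R] {p a : R[X]} {n : ℕ}
    (hp : p.natDegree ≤ n) (ha : a.natDegree ≤ n) (h : (X - 1) * p ^ 2 + 1 = X ^ (n + 1) * a) :
    (MvPolynomial.X 0 - MvPolynomial.X 1) * p.homogenize n ^ 2 + MvPolynomial.X 1 ^ (2 * n + 1) =
      MvPolynomial.X 0 ^ (n + 1) * a.homogenize n := by
  have h1 : (X - 1 : R[X]).natDegree ≤ 1 := by simpa using natDegree_X_sub_C_le (1 : R)
  have := congrArg (homogenize · (1 + (n + n))) h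
  rw [homogenize_add, sq, homogenize_mul _ _ h1 (natDegree_mul_le.trans (by omega)),
    homogenize_mul _ _ hp hp, show 1 + (n + n) = (n + 1) + n by omega,
    homogenize_mul _ _ (natDegree_X_pow_le _) ha] at this
  rw [show 2 * n + 1 = (n + 1) + n by omega]
  simpa [homogenize_X_pow, sq] using this

end Polynomial

section CentralBinomSeries

open PowerSeries

noncomputable def centralBinomSeries : ℝ⟦X⟧ :=
  mk fun n => (n.centralBinom : ℝ) / 4 ^ n

@[simp]
lemma coeff_centralBinomSeries (n : ℕ) :
    coeff n centralBinomSeries = (n.centralBinom : ℝ) / 4 ^ n :=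
  coeff_mk _ _

lemma two_mul_succ_mul_coeff_succ_centralBinomSeries (n : ℕ) :
    2 * (n + 1) * coeff (n + 1) centralBinomSeries =
      (2 * n + 1) * coeff n centralBinomSeries := by
  have h : ((n : ℝ) + 1) * (n + 1).centralBinom = 2 * (2 * n + 1) * n.centralBinom := by
    exact_mod_cast Nat.succ_mul_centralBinom_succ n
  simp only [coeff_centralBinomSeries, pow_succ]
  field_simp
  linear_combination 2 * h

lemma two_mul_one_sub_X_mul_derivative_centralBinomSeries :
    2 * (1 - X) * d⁄dX ℝ centralBinomSeries = centralBinomSeries := by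
  ext n
  rw [show (2 : ℝ⟦X⟧) * (1 - X) * d⁄dX ℝ centralBinomSeries =
      C 2 * d⁄dX ℝ centralBinomSeries - X * (C 2 * d⁄dX ℝ centralBinomSeries) by
    rw [map_ofNat]; ring, map_sub]
  cases n with
  | zero =>
    simpa [coeff_derivative, mul_comm] using two_mul_succ_mul_coeff_succ_centralBinomSeries 0
  | succ n =>
    have h := two_mul_succ_mul_coeff_succ_centralBinomSeries (n + 1)
    rw [coeff_succ_X_mul]
    simp only [coeff_derivative, coeff_C_mul]
    push_cast at h ⊢
    linear_combination h

lemma one_sub_X_mul_centralBinomSeries_sq : (1 - X) * centralBinomSeries ^ 2 = 1 := by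
  apply derivative.ext
  · rw [Derivation.leibniz, derivative_pow, map_sub, derivative_X, derivative_one]
    simp only [smul_eq_mul, Nat.cast_ofNat]
    linear_combination centralBinomSeries * two_mul_one_sub_X_mul_derivative_centralBinomSeries
  · simp only [map_mul, map_sub, map_one, map_pow, ← coeff_zero_eq_constantCoeff_apply,
      coeff_centralBinomSeries]
    simp

end CentralBinomSeries

open Polynomial in
lemma X_pow_dvd_X_sub_one_mul_trunc_centralBinomSeries_sq_add_one (n : ℕ) :
    X ^ n ∣ (X - 1) * (PowerSeries.trunc n centralBinomSeries) ^ 2 + 1 := by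
  set p := PowerSeries.trunc n centralBinomSeries
  have htrunc : PowerSeries.X ^ n ∣ (p : PowerSeries ℝ) - centralBinomSeries := by
    refine PowerSeries.X_pow_dvd_iff.mpr fun m hm => ?_
    rw [map_sub, PowerSeries.coeff_coe_trunc_of_lt hm, sub_self]
  have hcoe : (((X - 1) * p ^ 2 + 1 : ℝ[X]) : PowerSeries ℝ) =
      (PowerSeries.X - 1) * ((p : PowerSeries ℝ) + centralBinomSeries) *
        ((p : PowerSeries ℝ) - centralBinomSeries) := by
    push_cast
    linear_combination (-1 : PowerSeries ℝ) * one_sub_X_mul_centralBinomSeries_sq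
  rw [Polynomial.X_pow_dvd_iff_coe, hcoe]
  exact htrunc.mul_left _

open Polynomial in
lemma eval_trunc_centralBinomSeries_pos (n : ℕ) {t : ℝ} (ht : 0 ≤ t) :
    0 < (PowerSeries.trunc (n + 1) centralBinomSeries).eval t := by
  rw [eval, PowerSeries.eval₂_trunc_eq_sum_range, Finset.sum_range_succ']
  refine add_pos_of_nonneg_of_pos (Finset.sum_nonneg fun i _ => ?_) (by simp)
  simp only [coeff_centralBinomSeries, RingHom.id_apply]
  positivity

open Polynomial in
lemma exists_X_sub_one_mul_sq_add_one_eq_X_pow_mul (n : ℕ) :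
    ∃ p a : ℝ[X], p.natDegree ≤ n ∧ a.natDegree ≤ n ∧ (∀ t : ℝ, 0 ≤ t → 0 < p.eval t) ∧
      (X - 1) * p ^ 2 + 1 = X ^ (n + 1) * a := by
  set p := PowerSeries.trunc (n + 1) centralBinomSeries
  have hp : p.natDegree ≤ n := Nat.lt_succ_iff.mp (PowerSeries.natDegree_trunc_lt _ n)
  obtain ⟨a, ha⟩ := X_pow_dvd_X_sub_one_mul_trunc_centralBinomSeries_sq_add_one (n + 1)
  exact ⟨p, a, hp, natDegree_le_of_X_pow_mul_eq ha.symm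
    (ha ▸ natDegree_X_sub_one_mul_sq_add_one_le hp),
    fun t ht => eval_trunc_centralBinomSeries_pos n ht, ha⟩

lemma sq_half_add_one_add_sq_I_mul_half_sub_one (z : ℂ) :
    (2⁻¹ * (z + 1)) ^ 2 + (Complex.I * (2⁻¹ * (z - 1))) ^ 2 = z := by
  linear_combination (2⁻¹ * (z - 1)) ^ 2 * Complex.I_sq

namespace MvPolynomial

lemma eval_map_rename_swap (q : MvPolynomial (Fin 2) ℝ) (s t : ℂ) :
    eval ![s, t] (map (algebraMap ℝ ℂ) (rename (Equiv.swap 0 1) q)) = aeval ![t, s] q := by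
  rw [eval_map, eval₂_rename, aeval_def]
  congr 1
  ext i
  fin_cases i <;> rfl

lemma im_coeff_map_algebraMap {σ : Type*} (q : MvPolynomial σ ℝ) (m : σ →₀ ℕ) :
    ((map (algebraMap ℝ ℂ) q).coeff m).im = 0 := by
  simp [coeff_map]

lemma re_coeff_C_I_mul_map_algebraMap {σ : Type*} (q : MvPolynomial σ ℝ) (m : σ →₀ ℕ) :
    ((C Complex.I * map (algebraMap ℝ ℂ) q).coeff m).re = 0 := by
  simp [coeff_C_mul, coeff_map]

end MvPolynomial

open MvPolynomial in
theorem stmt_2 (k : ℕ) (hk : 1 ≤ k) :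
    ∃ ρ β₁ β₂ : MvPolynomial (Fin 2) ℂ,
      (∀ n, (ρ.coeff n).im = 0) ∧
      (∀ n, (β₁.coeff n).im = 0) ∧
      (∀ n, (β₂.coeff n).re = 0) ∧
      (∀ s t : ℂ,
        (t - s) * (MvPolynomial.eval ![s, t] ρ) ^ 2 + s ^ (2 * k - 1) =
          t ^ k * ((MvPolynomial.eval ![s, t] β₁) ^ 2 +
            (MvPolynomial.eval ![s, t] β₂) ^ 2)) ∧
      (∀ t : ℝ, 0 ≤ t → ∃ c : ℝ, 0 < c ∧
        MvPolynomial.eval ![1, (t : ℂ)] ρ = (c : ℂ)) := by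
  obtain ⟨n, rfl⟩ : ∃ n, k = n + 1 := ⟨k - 1, by omega⟩
  obtain ⟨p, a, hp, ha, hpos, hpa⟩ := exists_X_sub_one_mul_sq_add_one_eq_X_pow_mul n
  have hom := Polynomial.homogenize_X_sub_one_mul_sq_add_one hp ha hpa
  -- `homogenize` puts the variable at `X 0`, whereas `ρ(s, t)` has it at `t`.
  let toC : MvPolynomial (Fin 2) ℝ → MvPolynomial (Fin 2) ℂ :=
    fun q => map (algebraMap ℝ ℂ) (rename (Equiv.swap 0 1) q)
  refine ⟨toC (p.homogenize n), toC (C 2⁻¹ * (a.homogenize n + 1)),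
    C Complex.I * toC (C 2⁻¹ * (a.homogenize n - 1)),
    im_coeff_map_algebraMap _, im_coeff_map_algebraMap _, re_coeff_C_I_mul_map_algebraMap _,
    fun s t => ?_, fun t ht => ⟨p.eval t, hpos t ht, ?_⟩⟩
  · have := congrArg (aeval ![t, s]) hom
    simp only [toC, eval_C, map_mul, eval_map_rename_swap] at this ⊢
    simp only [map_add, map_mul, map_sub, map_pow, map_one, aeval_X, algHom_C,
      Matrix.cons_val_zero, Matrix.cons_val_one, Matrix.cons_val_fin_one,
      Complex.coe_algebraMap, Complex.ofReal_inv, Complex.ofReal_ofNat] at this ⊢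
    rw [sq_half_add_one_add_sq_I_mul_half_sub_one, show 2 * (n + 1) - 1 = 2 * n + 1 by omega]
    exact this
  · rw [eval_map_rename_swap, Polynomial.aeval_homogenize_of_eq_one hp _ rfl]
    exact (Polynomial.ofReal_eval p t).symm
end

section
/- Let f, g : ℂ^m → ℂ^r be polynomial maps pseudo-homogeneous of order k ≥ 1 and b-orthogonal, and let ρ, β₁, β₂ be polynomials satisfying (t-s)ρ(s,t)² + s^(2k-1) = t^k(β₁(s,t)² + β₂(s,t)²). Define F : ℂ^m × ℂ^ℓ → ℂ^r × ℂ^ℓ by F(z,u) = (β₁(q(z)+q(u), q(z))·f(z) + β₂(q(z)+q(u), q(z))·g(z), ρ(q(z)+q(u), q(z))·u). Then F is pseudo-homogeneous of order 2k-1: q(F(z,u)) = (q(z) + q(u))^(2k-1) for all (z,u). -/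
open Finset

theorem sum_sq_add_of_sum_mul_eq_zero {ι R : Type*} [Fintype ι] [CommRing R]
    (v w : ι → R) (hvw : ∑ i, v i * w i = 0) (a b : R) :
    ∑ i, (a * v i + b * w i) ^ 2 = a ^ 2 * ∑ i, v i ^ 2 + b ^ 2 * ∑ i, w i ^ 2 := by
  have hexpand : ∀ i, (a * v i + b * w i) ^ 2
      = a ^ 2 * v i ^ 2 + b ^ 2 * w i ^ 2 + 2 * a * b * (v i * w i) := fun i => by ring
  simp only [hexpand, sum_add_distrib, ← mul_sum, hvw, mul_zero, add_zero]

theorem sum_const_mul_sq {ι R : Type*} [Fintype ι] [CommSemiring R] (c : R) (u : ι → R) :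
    ∑ j, (c * u j) ^ 2 = c ^ 2 * ∑ j, u j ^ 2 := by
  simp only [mul_pow, mul_sum]

theorem stmt_12_general (m r ℓ k : ℕ)
    (f g : (Fin m → ℂ) → (Fin r → ℂ))
    (hf : ∀ z, (∑ i, (f z i) ^ 2) = (∑ j, (z j) ^ 2) ^ k)
    (hg : ∀ z, (∑ i, (g z i) ^ 2) = (∑ j, (z j) ^ 2) ^ k)
    (horth : ∀ z, (∑ i, f z i * g z i) = 0)
    (ρ β₁ β₂ : MvPolynomial (Fin 2) ℂ)
    (hid : ∀ s t : ℂ,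
      (t - s) * (MvPolynomial.eval ![s, t] ρ) ^ 2 + s ^ (2 * k - 1) =
        t ^ k * ((MvPolynomial.eval ![s, t] β₁) ^ 2 +
          (MvPolynomial.eval ![s, t] β₂) ^ 2)) :
    ∀ (z : Fin m → ℂ) (u : Fin ℓ → ℂ),
      (∑ i, ((MvPolynomial.eval ![(∑ j, (z j) ^ 2) + (∑ j, (u j) ^ 2), ∑ j, (z j) ^ 2] β₁) * f z i +
             (MvPolynomial.eval ![(∑ j, (z j) ^ 2) + (∑ j, (u j) ^ 2), ∑ j, (z j) ^ 2] β₂) * g z i) ^ 2) +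
      (∑ j, ((MvPolynomial.eval ![(∑ j, (z j) ^ 2) + (∑ j, (u j) ^ 2), ∑ j, (z j) ^ 2] ρ) * u j) ^ 2) =
        ((∑ j, (z j) ^ 2) + (∑ j, (u j) ^ 2)) ^ (2 * k - 1) := by
  intro z u
  rw [sum_sq_add_of_sum_mul_eq_zero _ _ (horth z), hf, hg, sum_const_mul_sq]
  -- with s = q(z) + q(u) and t = q(z), the factor t - s is -q(u)
  linear_combination -hid ((∑ j, z j ^ 2) + ∑ j, u j ^ 2) (∑ j, z j ^ 2)

theorem stmt_12 (m r ℓ k : ℕ) (hk : 1 ≤ k)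
    (f g : (Fin m → ℂ) → (Fin r → ℂ))
    (hf : ∀ z, (∑ i, (f z i) ^ 2) = (∑ j, (z j) ^ 2) ^ k)
    (hg : ∀ z, (∑ i, (g z i) ^ 2) = (∑ j, (z j) ^ 2) ^ k)
    (horth : ∀ z, (∑ i, f z i * g z i) = 0)
    (ρ β₁ β₂ : MvPolynomial (Fin 2) ℂ)
    (hid : ∀ s t : ℂ,
      (t - s) * (MvPolynomial.eval ![s, t] ρ) ^ 2 + s ^ (2 * k - 1) =
        t ^ k * ((MvPolynomial.eval ![s, t] β₁) ^ 2 +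
          (MvPolynomial.eval ![s, t] β₂) ^ 2)) :
    ∀ (z : Fin m → ℂ) (u : Fin ℓ → ℂ),
      (∑ i, ((MvPolynomial.eval ![(∑ j, (z j) ^ 2) + (∑ j, (u j) ^ 2), ∑ j, (z j) ^ 2] β₁) * f z i +
             (MvPolynomial.eval ![(∑ j, (z j) ^ 2) + (∑ j, (u j) ^ 2), ∑ j, (z j) ^ 2] β₂) * g z i) ^ 2) +
      (∑ j, ((MvPolynomial.eval ![(∑ j, (z j) ^ 2) + (∑ j, (u j) ^ 2), ∑ j, (z j) ^ 2] ρ) * u j) ^ 2) =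
        ((∑ j, (z j) ^ 2) + (∑ j, (u j) ^ 2)) ^ (2 * k - 1) :=
  stmt_12_general m r ℓ k f g hf hg horth ρ β₁ β₂ hid
end

section
/- If φ : ℂ^(n+1) → ℂ^(n+1) is pseudo-homogeneous of even order and n is even, then the restriction φ : Q^n → Q^n is homotopic to φ∘(-Id) : Q^n → Q^n, where -Id(z) = -z; in particular φ|_{Q^n} is homotopic to its own precomposition with the antipodal map of Q^n. -/
/-!
Write `q z = ∑ zⱼ²`, so that `q (c • z) = c² q z`. If `q ∘ φ = q ^ k`, then for every `c ≠ 0` the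
rescaled map `z ↦ c⁻ᵏ φ (c z)` again satisfies `q ∘ φ = q ^ k` and hence preserves the quadric
`q = 1`. Letting `c` run along a path from `1` to `-1` in `ℂ \ {0}` deforms `φ` into
`z ↦ (-1)ᵏ φ (-z)`, which is `φ ∘ (-id)` when `k` is even.
-/

open Finset unitInterval

variable {ι κ : Type*} [Fintype ι] [Fintype κ]

theorem sum_sq_smul (c : ℂ) (z : ι → ℂ) : ∑ j, (c • z) j ^ 2 = c ^ 2 * ∑ j, z j ^ 2 := by
  simp only [Pi.smul_apply, smul_eq_mul, mul_pow, mul_sum]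

def IsPseudoHomogeneous (k : ℕ) (φ : (ι → ℂ) → (κ → ℂ)) : Prop :=
  ∀ z, ∑ i, φ z i ^ 2 = (∑ j, z j ^ 2) ^ k

namespace IsPseudoHomogeneous

variable {k : ℕ} {φ : (ι → ℂ) → (κ → ℂ)}

theorem sum_sq_eq_one (hφ : IsPseudoHomogeneous k φ) {z : ι → ℂ} (hz : ∑ j, z j ^ 2 = 1) :
    ∑ i, φ z i ^ 2 = 1 := by
  rw [hφ, hz, one_pow]

theorem rescale (hφ : IsPseudoHomogeneous k φ) {c : ℂ} (hc : c ≠ 0) :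
    IsPseudoHomogeneous k fun z => c⁻¹ ^ k • φ (c • z) := by
  intro z
  rw [sum_sq_smul, hφ, sum_sq_smul, mul_pow, ← mul_assoc, ← pow_mul, ← pow_mul', ← mul_pow,
    inv_mul_cancel₀ hc, one_pow, one_mul]

theorem comp_neg (hφ : IsPseudoHomogeneous k φ) : IsPseudoHomogeneous k fun z => φ (-z) := by
  intro z
  rw [hφ, ← neg_one_smul ℂ z, sum_sq_smul, neg_one_sq, one_mul]

def restrictQuadric (hφ : IsPseudoHomogeneous k φ) (hφc : Continuous φ) :
    C({z : ι → ℂ // ∑ j, z j ^ 2 = 1}, {w : κ → ℂ // ∑ i, w i ^ 2 = 1}) where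
  toFun z := ⟨φ z, hφ.sum_sq_eq_one z.2⟩
  continuous_toFun := (hφc.comp continuous_subtype_val).subtype_mk _

theorem restrictQuadric_homotopic_comp_neg (hφ : IsPseudoHomogeneous k φ) (hφc : Continuous φ)
    (hk : Even k) (γ : Path (1 : ℂ) (-1)) (hγ : ∀ t, γ t ≠ 0) :
    (restrictQuadric hφ hφc).Homotopic (restrictQuadric hφ.comp_neg (hφc.comp continuous_neg)) :=
  ⟨{ toFun := fun p => ⟨(γ p.1)⁻¹ ^ k • φ (γ p.1 • (p.2 : ι → ℂ)),
        (hφ.rescale (hγ p.1)).sum_sq_eq_one p.2.2⟩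
     continuous_toFun := by
       have hγc : Continuous fun p : I × {z : ι → ℂ // ∑ j, z j ^ 2 = 1} => γ p.1 :=
         γ.continuous.comp continuous_fst
       exact Continuous.subtype_mk (((hγc.inv₀ fun p => hγ p.1).pow k).smul
         (hφc.comp (hγc.smul (continuous_subtype_val.comp continuous_snd)))) _
     map_zero_left := fun z => by ext1; simp [restrictQuadric]
     map_one_left := fun z => by ext1; simp [restrictQuadric, hk.neg_one_pow] }⟩

end IsPseudoHomogeneous

noncomputable def Path.halfTurn : Path (1 : ℂ) (-1) where
  toFun t := Complex.exp (Real.pi * Complex.I * (t : ℝ))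
  continuous_toFun := by fun_prop
  source' := by simp
  target' := by simp [Complex.exp_pi_mul_I]

theorem Path.halfTurn_ne_zero (t : I) : Path.halfTurn t ≠ 0 :=
  Complex.exp_ne_zero _

theorem stmt_19_general (n rr : ℕ)
    (φ : (Fin (n + 1) → ℂ) → (Fin (n + 1) → ℂ)) (hφc : Continuous φ)
    (hφ : ∀ z, (∑ i, (φ z i) ^ 2) = (∑ j, (z j) ^ 2) ^ (2 * rr)) :
    ∃ F G : C({z : Fin (n + 1) → ℂ // (∑ j, (z j) ^ 2) = 1},
              {z : Fin (n + 1) → ℂ // (∑ j, (z j) ^ 2) = 1}),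
      (∀ z, (F z : Fin (n + 1) → ℂ) = φ z) ∧
      (∀ z, (G z : Fin (n + 1) → ℂ) = φ (-(z : Fin (n + 1) → ℂ))) ∧
      F.Homotopic G := by
  have hφ' : IsPseudoHomogeneous (2 * rr) φ := hφ
  exact ⟨_, _, fun _ => rfl, fun _ => rfl,
    hφ'.restrictQuadric_homotopic_comp_neg hφc (even_two_mul rr) Path.halfTurn
      Path.halfTurn_ne_zero⟩

theorem stmt_19 (n rr : ℕ) (hn : Even n)
    (φ : (Fin (n + 1) → ℂ) → (Fin (n + 1) → ℂ)) (hφc : Continuous φ)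
    (hφ : ∀ z, (∑ i, (φ z i) ^ 2) = (∑ j, (z j) ^ 2) ^ (2 * rr)) :
    ∃ F G : C({z : Fin (n + 1) → ℂ // (∑ j, (z j) ^ 2) = 1},
              {z : Fin (n + 1) → ℂ // (∑ j, (z j) ^ 2) = 1}),
      (∀ z, (F z : Fin (n + 1) → ℂ) = φ z) ∧
      (∀ z, (G z : Fin (n + 1) → ℂ) = φ (-(z : Fin (n + 1) → ℂ))) ∧
      F.Homotopic G :=
  stmt_19_general n rr φ hφc hφ
end
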